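/- arXiv:2307.02481 — 2 statements merged into one kernel-verified Lean document; each statement's English description precedes it below -/
import Mathlib

section
/- Let N ≥ 2, ρ_L, ρ_R ∈ (0,1), and take ω_L = ω_R = 1, so that Q(J) = ∏_{i=1}^k (j_i − (i−1))/(N − (i−1)). Then for every n ≥ 1 and every 1 ≤ x_1 < … < x_n ≤ N−1, the n-point non-centered correlations of the explicit measure μ satisfy E_μ[∏_{i=1}^n η(x_i)] = Σ_{j=0}^n ρ_L^{n−j}(ρ_R−ρ_L)^j Σ_{1 ≤ i_1 < … < i_j ≤ n} ∏_{ℓ=1}^j (x_{i_ℓ} − (ℓ−1))/(N − (ℓ−1)), where E_μ[g] := Σ_{η ∈ {0,1}^{{1,…,N−1}}} μ(η) g(η). -/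
noncomputable def sepQ (N : ℕ) (ωL ωR : ℝ) (J : Finset ℕ) : ℝ :=
  (((J.sort (· ≤ ·)).zipIdx).map
    (fun p => (1 / ωL + (p.1 : ℝ) - ((p.2 : ℝ) + 1)) /
      (1 / ωL + 1 / ωR + (N : ℝ) - 1 - ((p.2 : ℝ) + 1)))).prod

noncomputable def sepF (N : ℕ) (ωL ωR : ℝ) (I : Finset ℕ) : ℝ :=
  ∑ J ∈ (Finset.Icc 1 (N - 1)).powerset.filter (fun J => I ⊆ J),
    (-1 : ℝ) ^ (J \ I).card * sepQ N ωL ωR J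

noncomputable def sepB (N : ℕ) (ρL ρR : ℝ) (I A : Finset ℕ) : ℝ :=
  (∏ x ∈ I, (if x ∈ A then ρR else 1 - ρR)) *
    (∏ x ∈ Finset.Icc 1 (N - 1) \ I, (if x ∈ A then ρL else 1 - ρL))

noncomputable def sepMu (N : ℕ) (ωL ωR ρL ρR : ℝ) (A : Finset ℕ) : ℝ :=
  ∑ I ∈ (Finset.Icc 1 (N - 1)).powerset, sepF N ωL ωR I * sepB N ρL ρR I A

noncomputable def occ (A : Finset ℕ) (x : ℕ) : ℝ := if x ∈ A then 1 else 0

noncomputable def sepGen (N : ℕ) (ωL ωR ρL ρR : ℝ) (f : Finset ℕ → ℝ) (A : Finset ℕ) : ℝ :=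
  (∑ x ∈ Finset.Icc 1 (N - 2),
      (occ A x * (1 - occ A (x + 1)) * (f (insert (x + 1) (A.erase x)) - f A) +
        occ A (x + 1) * (1 - occ A x) * (f (insert x (A.erase (x + 1))) - f A))) +
    ωL * (occ A 1 * (1 - ρL) * (f (A.erase 1) - f A) +
        ρL * (1 - occ A 1) * (f (insert 1 A) - f A)) +
    ωR * (occ A (N - 1) * (1 - ρR) * (f (A.erase (N - 1)) - f A) +
        ρR * (1 - occ A (N - 1)) * (f (insert (N - 1) A) - f A))

/-- Product over the increasingly sorted elements i_1 < … < i_j of s of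
(x_{i_ℓ} − (ℓ−1)) / (N − (ℓ−1))  (unit-conductance form). -/
noncomputable def idxProd (N n : ℕ) (x : Fin n → ℕ) (s : Finset (Fin n)) : ℝ :=
  ((s.sort (· ≤ ·)).zipIdx.map
    (fun p => ((x p.1 : ℝ) - (p.2 : ℝ)) / ((N : ℝ) - (p.2 : ℝ)))).prod

/-!
The measure μ is a signed mixture, with weights F(I), of the product Bernoulli measures with
density ρ_R on I and ρ_L off I, and F is the Möbius inverse of Q on the lattice of subsets:
Σ_{I ⊇ K} F(I) = Q(K). Under the product measure indexed by I the correlation of the sites in T is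
∏_{y ∈ T} (ρ_L + (ρ_R - ρ_L) 1_{y ∈ I}); expanding this product over the subsets K ⊆ T and summing
against F gives Σ_{K ⊆ T} ρ_L^{|T \ K|} (ρ_R - ρ_L)^{|K|} Q(K) for arbitrary conductances.
For ω_L = ω_R = 1 and T = {x_1, …, x_n}, Q(K) is the product in the statement.
-/

open Finset

section Subsets

variable {α : Type*} [DecidableEq α]

theorem prod_ite_mem_eq_of_subset {M : Type*} [CommMonoid M] {s t : Finset α} (h : t ⊆ s)
    (f g : α → M) :
    ∏ i ∈ s, (if i ∈ t then f i else g i) = (∏ i ∈ t, f i) * ∏ i ∈ s \ t, g i := by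
  rw [prod_ite, filter_mem_eq_inter, inter_eq_right.2 h, filter_notMem_eq_sdiff]

theorem sum_powerset_prod_ite {R : Type*} [CommSemiring R] (s : Finset α) (f g : α → R) :
    ∑ t ∈ s.powerset, ∏ i ∈ s, (if i ∈ t then f i else g i) = ∏ i ∈ s, (f i + g i) := by
  rw [prod_add]
  exact sum_congr rfl fun t ht => prod_ite_mem_eq_of_subset (mem_powerset.1 ht) f g

theorem sum_Icc_neg_one_pow_card_sdiff {R : Type*} [Ring R] {s t : Finset α} (h : s ⊆ t) :
    ∑ u ∈ Icc s t, (-1 : R) ^ #(t \ u) = if s = t then 1 else 0 := by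
  have hcompl : ∑ u ∈ Icc s t, (-1 : R) ^ #(t \ u) = ∑ v ∈ (t \ s).powerset, (-1 : R) ^ #v := by
    refine sum_nbij' (t \ ·) (t \ ·) ?_ ?_ ?_ ?_ fun _ _ => rfl
    · intro u hu
      rw [mem_Icc] at hu
      exact mem_powerset.2 (sdiff_subset_sdiff le_rfl hu.1)
    · intro v hv
      rw [mem_powerset] at hv
      refine mem_Icc.2 ⟨fun a ha => mem_sdiff.2 ⟨h ha, fun hav => ?_⟩, sdiff_subset⟩
      exact (mem_sdiff.1 (hv hav)).2 ha
    · intro u hu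
      exact Finset.sdiff_sdiff_eq_self (mem_Icc.1 hu).2
    · intro v hv
      exact Finset.sdiff_sdiff_eq_self ((mem_powerset.1 hv).trans sdiff_subset)
  have hint := congrArg (Int.cast : ℤ → R) (sum_powerset_neg_one_pow_card (x := t \ s))
  push_cast at hint
  rw [hcompl, hint]
  exact if_congr (sdiff_eq_empty_iff_subset.trans ⟨subset_antisymm h, fun hst => hst ▸ le_rfl⟩)
    rfl rfl

theorem sum_superset_sum_superset_neg_one_pow {R : Type*} [CommRing R] {S K : Finset α}
    (hK : K ⊆ S) (q : Finset α → R) :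
    ∑ I ∈ S.powerset with K ⊆ I, ∑ J ∈ S.powerset with I ⊆ J, (-1) ^ #(J \ I) * q J = q K := by
  rw [sum_comm' (t' := S.powerset.filter (K ⊆ ·)) (s' := (Icc K ·))]
  · rw [sum_congr rfl fun J hJ => by
      rw [← sum_mul, sum_Icc_neg_one_pow_card_sdiff (mem_filter.1 hJ).2]]
    simp [hK]
  · intro I J
    simp only [mem_filter, mem_powerset, mem_Icc]
    exact ⟨fun h => ⟨⟨h.1.2, h.2.2⟩, h.2.1, h.1.2.trans h.2.2⟩,
      fun h => ⟨⟨h.1.2.trans h.2.1, h.1.1⟩, h.2.1, h.1.2⟩⟩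

end Subsets

theorem prod_occ_eq_ite (A K : Finset ℕ) : ∏ y ∈ K, occ A y = if K ⊆ A then 1 else 0 := by
  simp only [occ, prod_boole]
  rfl

theorem sum_powerset_bernoulli_mul_prod_occ {S T : Finset ℕ} (hT : T ⊆ S) (p : ℕ → ℝ) :
    ∑ A ∈ S.powerset, (∏ y ∈ S, if y ∈ A then p y else 1 - p y) * ∏ y ∈ T, occ A y =
      ∏ y ∈ T, p y := by
  have hextend (f : ℕ → ℝ) : ∏ y ∈ T, f y = ∏ y ∈ S, if y ∈ T then f y else 1 := by
    rw [prod_ite_mem, inter_eq_right.2 hT]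
  have hsummand : ∀ A ∈ S.powerset,
      (∏ y ∈ S, if y ∈ A then p y else 1 - p y) * ∏ y ∈ T, occ A y =
        ∏ y ∈ S, if y ∈ A then p y else if y ∈ T then 0 else 1 - p y := by
    intro A _
    rw [hextend, ← prod_mul_distrib]
    refine prod_congr rfl fun y _ => ?_
    by_cases hA : y ∈ A <;> by_cases hT : y ∈ T <;> simp [occ, hA, hT]
  rw [sum_congr rfl hsummand, sum_powerset_prod_ite, hextend]
  refine prod_congr rfl fun y _ => ?_
  split_ifs <;> ring

theorem sepB_eq_prod_bernoulli (N : ℕ) (ρL ρR : ℝ) {I : Finset ℕ} (hI : I ⊆ Icc 1 (N - 1))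
    (A : Finset ℕ) :
    sepB N ρL ρR I A = ∏ y ∈ Icc 1 (N - 1),
      if y ∈ A then ρL + (ρR - ρL) * occ I y else 1 - (ρL + (ρR - ρL) * occ I y) := by
  rw [sepB, ← prod_ite_mem_eq_of_subset hI]
  refine prod_congr rfl fun y _ => ?_
  by_cases hyI : y ∈ I <;> by_cases hyA : y ∈ A <;> simp [occ, hyI, hyA]

theorem prod_add_mul_occ (a b : ℝ) (T I : Finset ℕ) :
    ∏ y ∈ T, (a + b * occ I y) =
      ∑ K ∈ T.powerset, a ^ (#T - #K) * b ^ #K * if K ⊆ I then 1 else 0 := by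
  simp_rw [add_comm a, prod_add]
  refine sum_congr rfl fun K hK => ?_
  rw [prod_mul_distrib, prod_occ_eq_ite, prod_const, prod_const,
    card_sdiff_of_subset (mem_powerset.1 hK)]
  ring

theorem sum_superset_sepF {N : ℕ} {K : Finset ℕ} (hK : K ⊆ Icc 1 (N - 1)) (ωL ωR : ℝ) :
    ∑ I ∈ (Icc 1 (N - 1)).powerset with K ⊆ I, sepF N ωL ωR I = sepQ N ωL ωR K :=
  sum_superset_sum_superset_neg_one_pow hK _

theorem sum_sepMu_mul_prod_occ {N : ℕ} {T : Finset ℕ} (hT : T ⊆ Icc 1 (N - 1))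
    (ωL ωR ρL ρR : ℝ) :
    ∑ A ∈ (Icc 1 (N - 1)).powerset, sepMu N ωL ωR ρL ρR A * ∏ y ∈ T, occ A y =
      ∑ K ∈ T.powerset, ρL ^ (#T - #K) * (ρR - ρL) ^ #K * sepQ N ωL ωR K := by
  set S := Icc 1 (N - 1)
  calc ∑ A ∈ S.powerset, sepMu N ωL ωR ρL ρR A * ∏ y ∈ T, occ A y
      = ∑ I ∈ S.powerset, sepF N ωL ωR I *
          ∑ A ∈ S.powerset, sepB N ρL ρR I A * ∏ y ∈ T, occ A y := by
        simp_rw [sepMu, sum_mul, mul_sum, mul_assoc]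
        exact sum_comm
    _ = ∑ I ∈ S.powerset, sepF N ωL ωR I * ∏ y ∈ T, (ρL + (ρR - ρL) * occ I y) := by
        refine sum_congr rfl fun I hI => ?_
        simp_rw [sepB_eq_prod_bernoulli N ρL ρR (mem_powerset.1 hI)]
        rw [sum_powerset_bernoulli_mul_prod_occ hT]
    _ = ∑ K ∈ T.powerset, ρL ^ (#T - #K) * (ρR - ρL) ^ #K *
          ∑ I ∈ S.powerset with K ⊆ I, sepF N ωL ωR I := by
        simp_rw [prod_add_mul_occ, mul_sum, sum_filter]
        rw [sum_comm]
        refine sum_congr rfl fun K _ => sum_congr rfl fun I _ => ?_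
        split_ifs <;> ring
    _ = ∑ K ∈ T.powerset, ρL ^ (#T - #K) * (ρR - ρL) ^ #K * sepQ N ωL ωR K :=
        sum_congr rfl fun K hK => by
          rw [sum_superset_sepF ((mem_powerset.1 hK).trans hT)]

theorem sepQ_one_one_map {n : ℕ} (N : ℕ) {x : Fin n → ℕ} (hx : StrictMono x)
    (s : Finset (Fin n)) :
    sepQ N 1 1 (s.map ⟨x, hx.injective⟩) = idxProd N n x s := by
  rw [sepQ, idxProd, ← (hx.strictMonoOn s).map_finsetSort, List.zipIdx_map, List.map_map]
  congr 1
  refine List.map_congr_left fun p _ => ?_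
  simp only [Function.comp_apply, Prod.map_fst, Prod.map_snd, id, Function.Embedding.coeFn_mk]
  congr 1 <;> ring

theorem sep_n_point_noncentered_unit_general
    (N n : ℕ) (ρL ρR : ℝ)
    (x : Fin n → ℕ) (hmono : StrictMono x)
    (hx1 : ∀ i, 1 ≤ x i) (hx2 : ∀ i, x i ≤ N - 1) :
    ∑ A ∈ (Finset.Icc 1 (N - 1)).powerset,
        sepMu N 1 1 ρL ρR A * ∏ i, occ A (x i)
      = ∑ j ∈ Finset.range (n + 1), ρL ^ (n - j) * (ρR - ρL) ^ j *
          ∑ s ∈ Finset.powersetCard j (Finset.univ : Finset (Fin n)), idxProd N n x s := by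
  set e : Fin n ↪ ℕ := ⟨x, hmono.injective⟩
  have hT : univ.map e ⊆ Icc 1 (N - 1) := by
    simpa [subset_iff, e] using fun i => And.intro (hx1 i) (hx2 i)
  have hocc (A : Finset ℕ) : ∏ i, occ A (x i) = ∏ y ∈ univ.map e, occ A y :=
    (prod_map univ e (occ A)).symm
  simp_rw [hocc]
  rw [sum_sepMu_mul_prod_occ hT, sum_powerset, card_map, card_univ, Fintype.card_fin]
  refine sum_congr rfl fun j _ => ?_
  rw [powersetCard_map, sum_map, mul_sum]
  refine sum_congr rfl fun s hs => ?_
  rw [RelEmbedding.coe_toEmbedding, mapEmbedding_apply, sepQ_one_one_map N hmono, card_map,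
    (mem_powersetCard.1 hs).2]

/-- with ω_L = ω_R = 1, the n-point non-centered correlations of μ. -/
theorem sep_n_point_noncentered_unit
    (N n : ℕ) (hN : 2 ≤ N) (hn : 1 ≤ n) (ρL ρR : ℝ)
    (hρL : 0 < ρL ∧ ρL < 1) (hρR : 0 < ρR ∧ ρR < 1)
    (x : Fin n → ℕ) (hmono : StrictMono x)
    (hx1 : ∀ i, 1 ≤ x i) (hx2 : ∀ i, x i ≤ N - 1) :
    ∑ A ∈ (Finset.Icc 1 (N - 1)).powerset,
        sepMu N 1 1 ρL ρR A * ∏ i, occ A (x i)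
      = ∑ j ∈ Finset.range (n + 1), ρL ^ (n - j) * (ρR - ρL) ^ j *
          ∑ s ∈ Finset.powersetCard j (Finset.univ : Finset (Fin n)), idxProd N n x s :=
  sep_n_point_noncentered_unit_general N n ρL ρR x hmono hx1 hx2
end

section
/- Let N ≥ 2 and ω_L, ω_R > 0. Define G on dual configurations by G(ξ) = 0 if ξ(0) ≥ 1, and otherwise, letting x_1 < … < x_m be the sites x ∈ {1,…,N−1} with ξ(x) = 1, G(ξ) = ∏_{i=1}^m (h(x_i) − (i−1))/(h(N) − (i−1)) (an empty product being 1). Then G is harmonic for the dual generator: L̂G(ξ) = 0 for every dual configuration ξ. -/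
/-!
Write `S` for the set of occupied bulk sites and `r y` for the number of sites of `S` below `y`,
so that `G = ∏_{y ∈ S} (h y - r y) / (h N - r y)`. This product is affine in each single value
`h y`, with a slope `q y`. A jump of a particle from `y` to an empty neighbour `y ± 1` keeps all
ranks and changes `h y` by `± 1`, hence changes `G` by `± q y`; since `ω_L = 1 / h 1` and
`ω_R = 1 / (h N - h (N - 1))`, absorption at `0` and at `N` contributes `-q 1` and `q (N - 1)`.
Two particles on neighbouring sites have equal slopes, so each bond contributes `q x - q (x + 1)`
(with `q = 0` on empty sites) and `L̂G` telescopes to zero.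
-/

/-- The harmonic function h on {0,…,N}: h(0) = 0, h(x) = 1/ω_L + x − 1 for 1 ≤ x ≤ N−1,
and h(N) = 1/ω_L + 1/ω_R + N − 2. -/
noncomputable def hFun (N : ℕ) (ωL ωR : ℝ) (x : ℕ) : ℝ :=
  if x = 0 then 0
  else if x = N then 1 / ωL + 1 / ωR + (N : ℝ) - 2
  else 1 / ωL + (x : ℝ) - 1

/-- ξ^{x,y}: the configuration ξ with one particle moved from x to y. -/
def dualMove (ξ : ℕ → ℕ) (x y : ℕ) : ℕ → ℕ :=
  fun z => if z = y then ξ y + 1 else if z = x then ξ x - 1 else ξ z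

/-- The generator L̂ of the dual (absorbing-boundary) process on {0,1,…,N}. -/
noncomputable def dualGen (N : ℕ) (ωL ωR : ℝ) (f : (ℕ → ℕ) → ℝ) (ξ : ℕ → ℕ) : ℝ :=
  (∑ x ∈ Finset.Icc 1 (N - 2),
      ((ξ x : ℝ) * (1 - (ξ (x + 1) : ℝ)) * (f (dualMove ξ x (x + 1)) - f ξ) +
        (ξ (x + 1) : ℝ) * (1 - (ξ x : ℝ)) * (f (dualMove ξ (x + 1) x) - f ξ))) +
    ωL * (ξ 1 : ℝ) * (f (dualMove ξ 1 0) - f ξ) +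
    ωR * (ξ (N - 1) : ℝ) * (f (dualMove ξ (N - 1) N) - f ξ)

/-- G(ξ): zero if some particle is absorbed at 0, otherwise, with x_1 < … < x_m the occupied
bulk sites of ξ, the product ∏_{i=1}^m (h(x_i) − (i−1)) / (h(N) − (i−1)). -/
noncomputable def dualG (N : ℕ) (ωL ωR : ℝ) (ξ : ℕ → ℕ) : ℝ :=
  if 1 ≤ ξ 0 then 0
  else ((((Finset.Icc 1 (N - 1)).filter (fun x => ξ x = 1)).sort (· ≤ ·)).zipIdx.map
    (fun p => (hFun N ωL ωR p.1 - (p.2 : ℝ)) / (hFun N ωL ωR N - (p.2 : ℝ)))).prod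

open Finset

section RankedProduct

variable {α : Type*} [LinearOrder α]

def rankBelow (s : Finset α) (y : α) : ℕ := #{z ∈ s | z < y}

lemma rankBelow_insert {s : Finset α} {a : α} (ha : a ∉ s) (y : α) :
    rankBelow (insert a s) y = rankBelow s y + if a < y then 1 else 0 := by
  unfold rankBelow
  rw [filter_insert]
  split_ifs
  · exact card_insert_of_notMem (fun hmem => ha (mem_filter.mp hmem).1)
  · rfl

lemma rankBelow_eq_erase_add {s : Finset α} {a : α} (ha : a ∈ s) (y : α) :
    rankBelow s y = rankBelow (s.erase a) y + if a < y then 1 else 0 := by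
  rw [← rankBelow_insert (notMem_erase a s), insert_erase ha]

lemma rankBelow_of_adjacent {s : Finset α} {x y : α} (hx : x ∈ s) (hxy : x < y)
    (hgap : ∀ z ∈ s, ¬(x < z ∧ z < y)) : rankBelow s y = rankBelow s x + 1 := by
  unfold rankBelow
  have : {z ∈ s | z < y} = insert x {z ∈ s | z < x} := by
    ext z
    simp only [mem_filter, mem_insert]
    constructor
    · rintro ⟨hz, hzy⟩
      rcases lt_trichotomy z x with h | rfl | h
      · exact Or.inr ⟨hz, h⟩
      · exact Or.inl rfl
      · exact absurd ⟨h, hzy⟩ (hgap z hz)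
    · rintro (rfl | ⟨hz, hzx⟩)
      · exact ⟨hx, hxy⟩
      · exact ⟨hz, hzx.trans hxy⟩
  rw [this, card_insert_of_notMem (by simp)]

lemma prod_zipIdx_sort {M : Type*} [CommMonoid M] (F : α → ℕ → M) (s : Finset α) (k : ℕ) :
    (((s.sort (· ≤ ·)).zipIdx k).map (fun p => F p.1 p.2)).prod
      = ∏ y ∈ s, F y (k + rankBelow s y) := by
  induction s using Finset.induction_on_min generalizing k with
  | empty => simp
  | insert a s ha ih =>
    have has : a ∉ s := fun h => lt_irrefl a (ha a h)
    rw [sort_insert _ (fun b hb => (ha b hb).le) has, List.zipIdx_cons, List.map_cons,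
      List.prod_cons, ih, prod_insert has]
    congr 1
    · have : rankBelow s a = 0 := card_eq_zero.mpr (filter_eq_empty_iff.mpr
        fun z hz => not_lt.mpr (ha z hz).le)
      rw [rankBelow_insert has, this, if_neg (lt_irrefl a)]
      rfl
    · refine prod_congr rfl fun y hy => ?_
      rw [rankBelow_insert has, if_pos (ha y hy)]
      congr 1
      omega

variable (g : α → ℝ) (D : ℝ)

noncomputable def rankFactor (s : Finset α) (y : α) : ℝ :=
  (g y - rankBelow s y) / (D - rankBelow s y)

noncomputable def rankedProd (s : Finset α) : ℝ := ∏ y ∈ s, rankFactor g D s y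

/-- `rankedProd g D s` is affine in the single value `g x`, with this slope. -/
noncomputable def rankedProdSlope (s : Finset α) (x : α) : ℝ :=
  (∏ y ∈ s.erase x, rankFactor g D s y) / (D - rankBelow s x)

variable {g D} {s : Finset α} {x y : α}

lemma rankedProd_eq_mul_slope (hx : x ∈ s) :
    rankedProd g D s = (g x - rankBelow s x) * rankedProdSlope g D s x := by
  rw [rankedProd, ← mul_prod_erase s _ hx, rankedProdSlope, rankFactor]
  ring

lemma rankedProd_move (hx : x ∈ s) (hy : y ∉ s) (hxy : ∀ z ∈ s, z ≠ x → (z < x ↔ z < y)) :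
    rankedProd g D (insert y (s.erase x)) - rankedProd g D s
      = (g y - g x) * rankedProdSlope g D s x := by
  have hy' : y ∉ s.erase x := fun h => hy (mem_of_mem_erase h)
  have hrank_y : rankBelow (insert y (s.erase x)) y = rankBelow s x := by
    rw [rankBelow_insert hy', rankBelow_eq_erase_add hx, if_neg (lt_irrefl y),
      if_neg (lt_irrefl x)]
    exact congrArg card (filter_congr fun z hz =>
      (hxy z (mem_of_mem_erase hz) (ne_of_mem_erase hz)).symm)
  have hrank : ∀ z ∈ s.erase x, rankBelow (insert y (s.erase x)) z = rankBelow s z := by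
    intro z hz
    have hzx := ne_of_mem_erase hz
    have hzy : z ≠ y := fun h => hy' (h ▸ hz)
    have hlt := hxy z (mem_of_mem_erase hz) hzx
    have hcmp : y < z ↔ x < z := by grind
    rw [rankBelow_insert hy', rankBelow_eq_erase_add hx]
    simp only [hcmp]
  have hslope : rankedProdSlope g D (insert y (s.erase x)) y = rankedProdSlope g D s x := by
    rw [rankedProdSlope, rankedProdSlope, erase_insert hy', hrank_y]
    congr 1
    exact prod_congr rfl fun z hz => by rw [rankFactor, rankFactor, hrank z hz]
  rw [rankedProd_eq_mul_slope (mem_insert_self y _), rankedProd_eq_mul_slope hx, hslope,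
    hrank_y]
  ring

lemma rankedProd_erase_max (hx : x ∈ s) (hmax : ∀ z ∈ s, z ≤ x)
    (hD : D - rankBelow s x ≠ 0) :
    rankedProd g D (s.erase x) - rankedProd g D s = (D - g x) * rankedProdSlope g D s x := by
  have hprod : rankedProd g D (s.erase x) = (D - rankBelow s x) * rankedProdSlope g D s x := by
    rw [rankedProdSlope, mul_div_cancel₀ _ hD, rankedProd]
    refine prod_congr rfl fun z hz => ?_
    rw [rankFactor, rankFactor, rankBelow_eq_erase_add hx z,
      if_neg (not_lt.mpr (hmax z (mem_of_mem_erase hz))), add_zero]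
  rw [hprod, rankedProd_eq_mul_slope hx]
  ring

lemma rankedProdSlope_eq_of_adjacent (hx : x ∈ s) (hy : y ∈ s) (hxy : x < y)
    (hgap : ∀ z ∈ s, ¬(x < z ∧ z < y)) (hg : g y = g x + 1) :
    rankedProdSlope g D s x = rankedProdSlope g D s y := by
  have hr := rankBelow_of_adjacent hx hxy hgap
  rw [rankedProdSlope, rankedProdSlope, ← mul_prod_erase _ _ (mem_erase.mpr ⟨hxy.ne', hy⟩),
    ← mul_prod_erase _ _ (mem_erase.mpr ⟨hxy.ne, hx⟩), erase_right_comm, rankFactor,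
    rankFactor, hr, hg]
  push_cast
  ring

end RankedProduct

section DualG

def occupiedSites (N : ℕ) (ξ : ℕ → ℕ) : Finset ℕ := {x ∈ Icc 1 (N - 1) | ξ x = 1}

@[simp]
lemma mem_occupiedSites {N x : ℕ} {ξ : ℕ → ℕ} :
    x ∈ occupiedSites N ξ ↔ (1 ≤ x ∧ x ≤ N - 1) ∧ ξ x = 1 := by
  rw [occupiedSites, mem_filter, mem_Icc]

lemma dualMove_apply_of_ne (ξ : ℕ → ℕ) {a b z : ℕ} (ha : z ≠ a) (hb : z ≠ b) :
    dualMove ξ a b z = ξ z := by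
  simp [dualMove, ha, hb]

lemma one_le_dualMove_zero {ξ : ℕ → ℕ} (h0 : 1 ≤ ξ 0) {a b : ℕ} (ha : a ≠ 0) :
    1 ≤ dualMove ξ a b 0 := by
  unfold dualMove
  split_ifs <;> omega

lemma occupiedSites_dualMove {N : ℕ} {ξ : ℕ → ℕ} {a b : ℕ} (ha : ξ a = 1)
    (hb : ξ b = 0) (hbN : b ∈ Icc 1 (N - 1)) :
    occupiedSites N (dualMove ξ a b) = insert b ((occupiedSites N ξ).erase a) := by
  ext z
  simp only [mem_Icc] at hbN
  simp only [mem_occupiedSites, mem_insert, mem_erase]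
  unfold dualMove
  split_ifs <;> omega

lemma occupiedSites_dualMove_out {N : ℕ} {ξ : ℕ → ℕ} {a b : ℕ} (ha : ξ a = 1)
    (hbN : b ∉ Icc 1 (N - 1)) :
    occupiedSites N (dualMove ξ a b) = (occupiedSites N ξ).erase a := by
  ext z
  simp only [mem_Icc] at hbN
  simp only [mem_occupiedSites, mem_erase]
  unfold dualMove
  split_ifs <;> omega

variable {N : ℕ} {ωL ωR : ℝ}

lemma dualG_of_absorbed {ξ : ℕ → ℕ} (h0 : 1 ≤ ξ 0) : dualG N ωL ωR ξ = 0 := if_pos h0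

lemma dualG_eq_rankedProd {ξ : ℕ → ℕ} (h0 : ξ 0 = 0) :
    dualG N ωL ωR ξ = rankedProd (hFun N ωL ωR) (hFun N ωL ωR N) (occupiedSites N ξ) := by
  rw [dualG, if_neg (by omega)]
  refine (prod_zipIdx_sort (fun y (i : ℕ) => (hFun N ωL ωR y - i) / (hFun N ωL ωR N - i)) _
    0).trans (prod_congr rfl fun y _ => ?_)
  rw [zero_add, rankFactor, occupiedSites]

lemma hFun_succ {x : ℕ} (hx : 1 ≤ x) (hxN : x + 1 < N) :
    hFun N ωL ωR (x + 1) = hFun N ωL ωR x + 1 := by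
  simp only [hFun, if_neg (show x + 1 ≠ 0 by omega), if_neg (show x + 1 ≠ N by omega),
    if_neg (show x ≠ 0 by omega), if_neg (show x ≠ N by omega)]
  push_cast
  ring

lemma hFun_one (hN : 2 ≤ N) : hFun N ωL ωR 1 = 1 / ωL := by
  simp [hFun, show (1 : ℕ) ≠ N by omega]

lemma hFun_self_sub_pred (hN : 2 ≤ N) : hFun N ωL ωR N - hFun N ωL ωR (N - 1) = 1 / ωR := by
  simp only [hFun, if_neg (show N ≠ 0 by omega), if_neg (show N - 1 ≠ 0 by omega),
    if_neg (show N - 1 ≠ N by omega), if_true]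
  rw [Nat.cast_pred (by omega)]
  ring

lemma hFun_self_sub_pos (hωL : 0 < ωL) (hωR : 0 < ωR) (hN : 2 ≤ N) {k : ℕ} (hk : k ≤ N - 2) :
    0 < hFun N ωL ωR N - k := by
  have hk' : (k : ℝ) ≤ N - 2 := by
    rw [← Nat.cast_ofNat, ← Nat.cast_sub hN]
    exact_mod_cast hk
  simp only [hFun, if_neg (show N ≠ 0 by omega), if_true]
  have := one_div_pos.mpr hωL
  have := one_div_pos.mpr hωR
  linarith

noncomputable def dualSlope (N : ℕ) (ωL ωR : ℝ) (ξ : ℕ → ℕ) (y : ℕ) : ℝ :=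
  if ξ y = 1 then rankedProdSlope (hFun N ωL ωR) (hFun N ωL ωR N) (occupiedSites N ξ) y else 0

variable {ξ : ℕ → ℕ}

lemma dualG_dualMove_sub_of_adjacent (h0 : ξ 0 = 0) {a b : ℕ} (ha : a ∈ Icc 1 (N - 1))
    (hb : b ∈ Icc 1 (N - 1)) (hadj : a = b + 1 ∨ b = a + 1) (hξa : ξ a = 1) (hξb : ξ b = 0) :
    dualG N ωL ωR (dualMove ξ a b) - dualG N ωL ωR ξ
      = (hFun N ωL ωR b - hFun N ωL ωR a)
        * rankedProdSlope (hFun N ωL ωR) (hFun N ωL ωR N) (occupiedSites N ξ) a := by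
  rw [mem_Icc] at ha hb
  rw [dualG_eq_rankedProd (by rw [dualMove_apply_of_ne ξ (by omega) (by omega), h0]),
    dualG_eq_rankedProd h0, occupiedSites_dualMove hξa hξb (mem_Icc.mpr hb)]
  refine rankedProd_move ?_ ?_ fun z hz hza => ?_
  · simp [ha, hξa]
  · simp [hξb]
  · have hzb : z ≠ b := fun h => by simp [h, hξb] at hz
    omega

lemma dualGen_bond_eq (h0 : ξ 0 = 0) (hbulk : ∀ x ∈ Icc 1 (N - 1), ξ x ≤ 1) {x : ℕ}
    (hx : x ∈ Icc 1 (N - 2)) :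
    (ξ x : ℝ) * (1 - (ξ (x + 1) : ℝ)) * (dualG N ωL ωR (dualMove ξ x (x + 1)) - dualG N ωL ωR ξ)
      + (ξ (x + 1) : ℝ) * (1 - (ξ x : ℝ))
        * (dualG N ωL ωR (dualMove ξ (x + 1) x) - dualG N ωL ωR ξ)
      = dualSlope N ωL ωR ξ x - dualSlope N ωL ωR ξ (x + 1) := by
  rw [mem_Icc] at hx
  have hx₀ : x ∈ Icc 1 (N - 1) := mem_Icc.mpr ⟨hx.1, by omega⟩
  have hx₁ : x + 1 ∈ Icc 1 (N - 1) := mem_Icc.mpr ⟨by omega, by omega⟩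
  have hstep := hFun_succ (ωL := ωL) (ωR := ωR) hx.1 (by omega : x + 1 < N)
  have := hbulk x hx₀
  have := hbulk (x + 1) hx₁
  rcases (by omega : ξ x = 0 ∨ ξ x = 1) with h | h <;>
    rcases (by omega : ξ (x + 1) = 0 ∨ ξ (x + 1) = 1) with h' | h'
  · simp [dualSlope, h, h']
  · rw [dualG_dualMove_sub_of_adjacent h0 hx₁ hx₀ (Or.inl rfl) h' h, hstep]
    simp [dualSlope, h, h']
  · rw [dualG_dualMove_sub_of_adjacent h0 hx₀ hx₁ (Or.inr rfl) h h', hstep]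
    simp [dualSlope, h, h']
  · rw [dualSlope, dualSlope, if_pos h, if_pos h', rankedProdSlope_eq_of_adjacent
      (by simp [h]; omega) (by simp [h']; omega) (lt_add_one x) (fun z _ => by omega) hstep]
    simp [h, h']

lemma rankBelow_occupiedSites_one : rankBelow (occupiedSites N ξ) 1 = 0 :=
  card_eq_zero.mpr (filter_eq_empty_iff.mpr fun z hz => by
    rw [mem_occupiedSites] at hz
    omega)

lemma rankBelow_occupiedSites_pred_le : rankBelow (occupiedSites N ξ) (N - 1) ≤ N - 2 := by
  calc rankBelow (occupiedSites N ξ) (N - 1) ≤ #(Ico 1 (N - 1)) := by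
        refine card_le_card fun z hz => ?_
        simp only [mem_filter, mem_occupiedSites, mem_Ico] at hz ⊢
        omega
    _ = N - 2 := by simp; omega

lemma dualGen_left_eq (hωL : ωL ≠ 0) (hN : 2 ≤ N) (h0 : ξ 0 = 0) (h1 : ξ 1 ≤ 1) :
    ωL * (ξ 1 : ℝ) * (dualG N ωL ωR (dualMove ξ 1 0) - dualG N ωL ωR ξ)
      = -dualSlope N ωL ωR ξ 1 := by
  rcases (by omega : ξ 1 = 0 ∨ ξ 1 = 1) with h | h
  · simp [dualSlope, h]
  · have hmem : 1 ∈ occupiedSites N ξ := by simp [h]; omega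
    rw [dualG_of_absorbed (by simp [dualMove]), dualG_eq_rankedProd h0,
      rankedProd_eq_mul_slope hmem, rankBelow_occupiedSites_one, hFun_one hN, dualSlope, if_pos h,
      h]
    field_simp
    ring

lemma dualGen_right_eq (hωL : 0 < ωL) (hωR : 0 < ωR) (hN : 2 ≤ N) (h0 : ξ 0 = 0)
    (h1 : ξ (N - 1) ≤ 1) :
    ωR * (ξ (N - 1) : ℝ) * (dualG N ωL ωR (dualMove ξ (N - 1) N) - dualG N ωL ωR ξ)
      = dualSlope N ωL ωR ξ (N - 1) := by
  rcases (by omega : ξ (N - 1) = 0 ∨ ξ (N - 1) = 1) with h | h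
  · simp [dualSlope, h]
  · have hmem : N - 1 ∈ occupiedSites N ξ :=
      mem_filter.mpr ⟨mem_Icc.mpr ⟨by omega, le_rfl⟩, h⟩
    have hmax : ∀ z ∈ occupiedSites N ξ, z ≤ N - 1 := fun z hz =>
      (mem_Icc.mp (mem_filter.mp hz).1).2
    rw [dualG_eq_rankedProd (by rw [dualMove_apply_of_ne ξ (by omega) (by omega), h0]),
      dualG_eq_rankedProd h0, occupiedSites_dualMove_out h (by simp only [mem_Icc]; omega),
      rankedProd_erase_max hmem hmax
        (hFun_self_sub_pos hωL hωR hN rankBelow_occupiedSites_pred_le).ne',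
      hFun_self_sub_pred hN, dualSlope, if_pos h, h, Nat.cast_one]
    field_simp

lemma dualGen_of_absorbed (hN : 2 ≤ N) (h0 : 1 ≤ ξ 0) : dualGen N ωL ωR (dualG N ωL ωR) ξ = 0 := by
  have hmove : ∀ {a b : ℕ}, a ≠ 0 → dualG N ωL ωR (dualMove ξ a b) = 0 := fun ha =>
    dualG_of_absorbed (one_le_dualMove_zero h0 ha)
  rw [dualGen, dualG_of_absorbed h0, hmove one_ne_zero, hmove (by omega : N - 1 ≠ 0)]
  simp only [sub_zero, mul_zero, add_zero]
  refine sum_eq_zero fun x hx => ?_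
  rw [mem_Icc] at hx
  rw [hmove (by omega : x ≠ 0), hmove (by omega : x + 1 ≠ 0)]
  ring

end DualG

/-- G is harmonic for the dual generator on dual configurations. -/
theorem dualG_harmonic
    (N : ℕ) (hN : 2 ≤ N) (ωL ωR : ℝ) (hωL : 0 < ωL) (hωR : 0 < ωR) :
    ∀ ξ : ℕ → ℕ, (∀ x ∈ Finset.Icc 1 (N - 1), ξ x ≤ 1) →
      dualGen N ωL ωR (dualG N ωL ωR) ξ = 0 := by
  intro ξ hbulk
  rcases Nat.eq_zero_or_pos (ξ 0) with h0 | h0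
  · have htelescope := sum_Ico_sub (dualSlope N ωL ωR ξ) (show 1 ≤ N - 1 by omega)
    rw [show Ico 1 (N - 1) = Icc 1 (N - 2) by ext; simp; omega] at htelescope
    rw [dualGen, sum_congr rfl fun x hx => dualGen_bond_eq h0 hbulk hx,
      dualGen_left_eq hωL.ne' hN h0 (hbulk 1 (mem_Icc.mpr ⟨le_rfl, by omega⟩)),
      dualGen_right_eq hωL hωR hN h0 (hbulk (N - 1) (mem_Icc.mpr ⟨by omega, le_rfl⟩)),
      sum_sub_distrib]
    rw [sum_sub_distrib] at htelescope
    linarith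
  · exact dualGen_of_absorbed hN h0
end
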